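/- Let p : Fin n → ℝ be real periods with p i ≥ 2 for every i and ∑ i, 1 / p i ≤ 1/2. Then there exists a feasible pinwheel schedule for the pseudo-instance p. -/

import Mathlib

/-- A pinwheel schedule `σ` is feasible for a pseudo-instance of real periods `p`
if every job `i` is scheduled at least once in every window of `⌊p i⌋` consecutive days. -/
def PinwheelFeasibleR {n : ℕ} (p : Fin n → ℝ) (σ : ℕ → Option (Fin n)) : Prop :=
  ∀ (i : Fin n) (t : ℕ), ∃ s : ℕ, t ≤ s ∧ s < t + ⌊p i⌋₊ ∧ σ s = some i

/-- A pinwheel schedule `σ` is feasible for integer periods `p`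
if every job `i` is scheduled at least once in every window of `p i` consecutive days. -/
def PinwheelFeasibleN {n : ℕ} (p : Fin n → ℕ) (σ : ℕ → Option (Fin n)) : Prop :=
  ∀ (i : Fin n) (t : ℕ), ∃ s : ℕ, t ≤ s ∧ s < t + p i ∧ σ s = some i

/-- `lastCutPlusOne σ i t` is `t' + 1` where `t'` is the largest day `t' < t` with
`σ t' = some i` (bamboo `i` cut at the end of day `t'`), and `0` if there is no such day. -/
def lastCutPlusOne {n : ℕ} (σ : ℕ → Option (Fin n)) (i : Fin n) (t : ℕ) : ℕ :=
  Nat.findGreatest (fun u => 0 < u ∧ σ (u - 1) = some i) t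

/-- The height reached by bamboo `i` on day `t` under trimming schedule `σ`:
`h i * (t + 1 - s)` where `s = lastCutPlusOne σ i t`. -/
noncomputable def bambooHeight {n : ℕ} (h : Fin n → ℝ) (σ : ℕ → Option (Fin n))
    (i : Fin n) (t : ℕ) : ℝ :=
  h i * ((t + 1 : ℝ) - (lastCutPlusOne σ i t : ℝ))

/-- A trimming schedule `σ` achieves value `V` if the height reached by every
bamboo on every day is at most `V`. -/
noncomputable def TrimmingAchieves {n : ℕ} (h : Fin n → ℝ) (σ : ℕ → Option (Fin n))
    (V : ℝ) : Prop :=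
  ∀ (i : Fin n) (t : ℕ), bambooHeight h σ i t ≤ V

/-!
Round every period down to a power of two, `Q i = 2 ^ ⌊log₂ ⌊p i⌋⌋`. Then `Q i ≤ ⌊p i⌋` and
`p i < 2 Q i`, so the rounded instance has density at most `2 ∑ 1 / p i ≤ 1`, and its periods
form a divisibility chain. Such an instance is scheduled by giving each job a residue class
`r i mod Q i`, with pairwise disjoint classes: taking the jobs in increasing order of period, the
classes chosen so far cover only `∑ Q a / Q j < Q a` of the residues modulo the next period `Q a`,
so one is still free.
-/

open Finset

theorem lt_pow_succ_log_floor {R : Type*} [Semiring R] [LinearOrder R] [IsStrictOrderedRing R]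
    [FloorSemiring R] {b : ℕ} (hb : 1 < b) (x : R) :
    x < (b : R) ^ (Nat.log b ⌊x⌋₊ + 1) :=
  calc x < ⌊x⌋₊ + 1 := Nat.lt_floor_add_one x
    _ ≤ (b ^ (Nat.log b ⌊x⌋₊ + 1) : ℕ) := by exact_mod_cast Nat.lt_pow_succ_log_self hb _
    _ = (b : R) ^ (Nat.log b ⌊x⌋₊ + 1) := by push_cast; rfl

theorem PinwheelFeasibleN.mono {n : ℕ} {p q : Fin n → ℕ} {σ : ℕ → Option (Fin n)}
    (h : PinwheelFeasibleN p σ) (hpq : ∀ i, p i ≤ q i) : PinwheelFeasibleN q σ := fun i t =>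
  let ⟨s, hts, hst, hσ⟩ := h i t
  ⟨s, hts, hst.trans_le (Nat.add_le_add_left (hpq i) t), hσ⟩

theorem exists_mod_eq_of_le_of_lt_add {q r : ℕ} (hr : r < q) (t : ℕ) :
    ∃ s, t ≤ s ∧ s < t + q ∧ s % q = r := by
  have hq : 0 < q := by omega
  have ht := Nat.div_add_mod t q
  have htq := Nat.mod_lt t hq
  by_cases hle : t % q ≤ r
  · exact ⟨q * (t / q) + r, by omega, by omega, by rw [Nat.mul_add_mod, Nat.mod_eq_of_lt hr]⟩
  · refine ⟨q * (t / q + 1) + r, by rw [Nat.mul_succ]; omega, by rw [Nat.mul_succ]; omega, ?_⟩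
    rw [Nat.mul_add_mod, Nat.mod_eq_of_lt hr]

theorem card_filter_mod_eq_le {q m : ℕ} (hq : q ∣ m) (r : ℕ) :
    #{x ∈ range m | x % q = r} ≤ m / q := by
  simpa using card_le_card_of_injOn (t := range (m / q)) (· / q)
    (fun x hx => by
      simp only [coe_filter, mem_range, Set.mem_ofPred_eq] at hx
      exact mem_range.2 (Nat.div_lt_div_of_lt_of_dvd hq hx.1))
    (fun x hx y hy hxy => by
      simp only [coe_filter, mem_range, Set.mem_ofPred_eq] at hx hy hxy
      rw [← Nat.div_add_mod x q, ← Nat.div_add_mod y q, hxy, hx.2, hy.2])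

theorem exists_lt_forall_mod_ne {ι : Type*} (s : Finset ι) (Q r : ι → ℕ) {m : ℕ} (hm : 0 < m)
    (hdvd : ∀ j ∈ s, Q j ∣ m) (hd : ∑ j ∈ s, (Q j : ℝ)⁻¹ < 1) :
    ∃ x < m, ∀ j ∈ s, x % Q j ≠ r j := by
  classical
  have hcover : #(s.biUnion fun j => {x ∈ range m | x % Q j = r j}) < #(range m) := by
    have hcount : (∑ j ∈ s, m / Q j : ℕ) = (m : ℝ) * ∑ j ∈ s, (Q j : ℝ)⁻¹ := by
      rw [Nat.cast_sum, mul_sum]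
      refine sum_congr rfl fun j hj => ?_
      have hQj : (Q j : ℝ) ≠ 0 :=
        Nat.cast_ne_zero.2 fun h => hm.ne' (Nat.eq_zero_of_zero_dvd (h ▸ hdvd j hj))
      rw [Nat.cast_div (hdvd j hj) hQj, div_eq_mul_inv]
    have hlt : ∑ j ∈ s, m / Q j < m := by
      have : (m : ℝ) * ∑ j ∈ s, (Q j : ℝ)⁻¹ < m := mul_lt_of_lt_one_right (by positivity) hd
      exact_mod_cast hcount ▸ this
    calc _ ≤ ∑ j ∈ s, #{x ∈ range m | x % Q j = r j} := card_biUnion_le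
      _ ≤ ∑ j ∈ s, m / Q j := sum_le_sum fun j hj => card_filter_mod_eq_le (hdvd j hj) (r j)
      _ < #(range m) := by rwa [card_range]
  obtain ⟨x, hx, hxs⟩ := exists_mem_notMem_of_card_lt_card hcover
  refine ⟨x, mem_range.1 hx, fun j hj hxj => hxs ?_⟩
  exact mem_biUnion.2 ⟨j, hj, mem_filter.2 ⟨hx, hxj⟩⟩

section Residues

variable {ι : Type*} (Q r : ι → ℕ) (s : Finset ι)

def DisjointResidues : Prop :=
  (∀ i ∈ s, r i < Q i) ∧ ∀ i ∈ s, ∀ j ∈ s, ∀ t, t % Q i = r i → t % Q j = r j → i = j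

variable {Q r s}

theorem DisjointResidues.insert_update [DecidableEq ι] (h : DisjointResidues Q r s) {a : ι}
    (ha : a ∉ s) {x : ℕ} (hx : x < Q a) (hdvd : ∀ j ∈ s, Q j ∣ Q a)
    (hfree : ∀ j ∈ s, x % Q j ≠ r j) :
    DisjointResidues Q (Function.update r a x) (insert a s) := by
  have hr : ∀ j ∈ s, Function.update r a x j = r j := fun j hj =>
    Function.update_of_ne (ne_of_mem_of_not_mem hj ha) x r
  have hnew : ∀ j ∈ s, ∀ t, t % Q a = x → t % Q j ≠ r j := fun j hj t hta htj =>
    hfree j hj (by rw [← hta, Nat.mod_mod_of_dvd t (hdvd j hj), htj])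
  have hcases : ∀ i ∈ insert a s, ∀ t, t % Q i = Function.update r a x i →
      (i = a ∧ t % Q a = x) ∨ (i ∈ s ∧ t % Q i = r i) := by
    intro i hi t ht
    rcases mem_insert.1 hi with rfl | hi
    · exact .inl ⟨rfl, by rwa [Function.update_self] at ht⟩
    · exact .inr ⟨hi, by rwa [hr i hi] at ht⟩
  refine ⟨fun i hi => ?_, fun i hi j hj t hti htj => ?_⟩
  · rcases mem_insert.1 hi with rfl | hi
    · rwa [Function.update_self]
    · rw [hr i hi]; exact h.1 i hi
  rcases hcases i hi t hti with ⟨rfl, hia⟩ | ⟨his, hir⟩ <;>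
    rcases hcases j hj t htj with ⟨rfl, hja⟩ | ⟨hjs, hjr⟩
  · rfl
  · exact (hnew j hjs t hia hjr).elim
  · exact (hnew i his t hja hir).elim
  · exact h.2 i his j hjs t hir hjr

theorem exists_disjointResidues (hQ : ∀ i ∈ s, 0 < Q i)
    (hchain : ∀ i ∈ s, ∀ j ∈ s, Q i ≤ Q j → Q i ∣ Q j) (hd : ∑ i ∈ s, (Q i : ℝ)⁻¹ ≤ 1) :
    ∃ r, DisjointResidues Q r s := by
  classical
  induction s using Finset.induction_on_max_value Q with
  | empty => exact ⟨0, by simp [DisjointResidues]⟩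
  | insert a s ha hmax ih =>
    have hsub := subset_insert a s
    have hQa : (0 : ℝ) < (Q a : ℝ)⁻¹ := by have := hQ a (mem_insert_self a s); positivity
    rw [sum_insert ha] at hd
    obtain ⟨r, hr⟩ := ih (fun i hi => hQ i (hsub hi))
      (fun i hi j hj => hchain i (hsub hi) j (hsub hj)) (by linarith)
    have hdvd : ∀ j ∈ s, Q j ∣ Q a := fun j hj =>
      hchain j (hsub hj) a (mem_insert_self a s) (hmax j hj)
    obtain ⟨x, hx, hfree⟩ :=
      exists_lt_forall_mod_ne s Q r (hQ a (mem_insert_self a s)) hdvd (by linarith)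
    exact ⟨_, hr.insert_update ha hx hdvd hfree⟩

end Residues

theorem DisjointResidues.pinwheelFeasibleN {n : ℕ} {Q r : Fin n → ℕ}
    (h : DisjointResidues Q r univ) :
    ∃ σ, PinwheelFeasibleN Q σ := by
  classical
  refine ⟨fun t => if hi : ∃ i, t % Q i = r i then some hi.choose else none, fun i t => ?_⟩
  obtain ⟨s, hts, hst, hs⟩ := exists_mod_eq_of_le_of_lt_add (h.1 i (mem_univ i)) t
  have hi : ∃ i, s % Q i = r i := ⟨i, hs⟩
  refine ⟨s, hts, hst, ?_⟩
  simp only [dif_pos hi]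
  exact congrArg some (h.2 _ (mem_univ _) i (mem_univ i) s hi.choose_spec hs)

theorem exists_pinwheelFeasibleN_of_dvd_chain {n : ℕ} (Q : Fin n → ℕ) (hQ : ∀ i, 0 < Q i)
    (hchain : ∀ i j, Q i ≤ Q j → Q i ∣ Q j) (hd : ∑ i, (Q i : ℝ)⁻¹ ≤ 1) :
    ∃ σ, PinwheelFeasibleN Q σ :=
  let ⟨_, hr⟩ := exists_disjointResidues (fun i _ => hQ i) (fun i _ j _ => hchain i j) hd
  hr.pinwheelFeasibleN

/-- Any pseudo-instance with all periods at least 2 and density at most 1/2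
admits a feasible pinwheel schedule (round periods down to powers of 2). -/
theorem pinwheel_of_density_le_half (n : ℕ) (p : Fin n → ℝ)
    (hp : ∀ i, 2 ≤ p i) (hd : ∑ i, 1 / p i ≤ 1 / 2) :
    ∃ σ : ℕ → Option (Fin n), PinwheelFeasibleR p σ := by
  set Q : Fin n → ℕ := fun i => 2 ^ Nat.log 2 ⌊p i⌋₊
  have hQ_le : ∀ i, Q i ≤ ⌊p i⌋₊ := fun i =>
    Nat.pow_log_le_self 2 (Nat.floor_pos.2 (by linarith [hp i])).ne'
  have hQ_inv : ∀ i, (Q i : ℝ)⁻¹ ≤ 2 * (1 / p i) := fun i => by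
    have hlt : p i < 2 * Q i := by
      simpa [Q, pow_succ, mul_comm] using lt_pow_succ_log_floor one_lt_two (p i)
    have hpi : 0 < p i := by linarith [hp i]
    rw [mul_one_div, le_div_iff₀ hpi, inv_mul_le_iff₀ (by positivity)]
    linarith
  have hdensity : ∑ i, (Q i : ℝ)⁻¹ ≤ 1 :=
    calc ∑ i, (Q i : ℝ)⁻¹ ≤ ∑ i, 2 * (1 / p i) := sum_le_sum fun i _ => hQ_inv i
      _ = 2 * ∑ i, 1 / p i := (mul_sum ..).symm
      _ ≤ 1 := by linarith
  obtain ⟨σ, hσ⟩ := exists_pinwheelFeasibleN_of_dvd_chain Q (fun _ => by positivity)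
    (fun i j hij => (Nat.pow_dvd_pow_iff_le_right one_lt_two).2
      ((Nat.pow_le_pow_iff_right one_lt_two).1 hij)) hdensity
  exact ⟨σ, hσ.mono hQ_le⟩
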